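/- arXiv:2101.02251 — 2 statements merged into one kernel-verified Lean document; each statement's English description precedes it below -/
import Mathlib

section
/- Cut-off pricing generates total worst-case revenue at least the fraction 1/(1 + log(P̄/P̲)) of the optimal value, where P̲ and P̄ are the minimum and maximum historical purchase prices over customers. -/
/-!
Let `v i = P i (c i)`, let `M` be the largest value of `#{i' | v i ≤ v i'} * v i` (attained
at the cut-off customer `i*`), and let `a ≤ b` be the smallest and largest of the `v i`.
Any prices earn at most `∑ v i` in the worst case, while the cut-off prices sell at price at
least `v i*` to every customer with `v i* ≤ v i`, hence earn at least `M`. For the ratio,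
remove the customers one at a time in increasing order of `v`: when the cheapest remaining
value rises from `x` to `y` with `k` customers still left, `k * y ≤ M` and
`1 - x / y ≤ log (y / x)` give `k * (y - x) ≤ M * log (y / x)`; summing,
`∑ v i ≤ m * a + M * log (b / a) ≤ M * (1 + log (b / a))`.
-/

/-- The worst-case revenue in the attained-supremum (relaxed, `ε = 0`) sense:
the customer purchases iff `p c ≤ P c`, and in the worst case she picks the
cheapest product among her historical choice `c` and products that are strictly
incentive-compatible under the new prices (`p j - p c < P j - P c`). -/
noncomputable def grev {n : ℕ} (P p : Fin n → ℝ) (c : Fin n) : ℝ :=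
  if p c ≤ P c then
    (Finset.univ.filter fun j => j = c ∨ p j - p c < P j - P c).inf' ⟨c, by simp⟩ p
  else 0

section

open Finset Real

lemma mul_sub_le_mul_log_div {k x y M : ℝ} (hk : 0 ≤ k) (hx : 0 < x) (hxy : x ≤ y)
    (hM : k * y ≤ M) : k * (y - x) ≤ M * log (y / x) := by
  have hy : 0 < y := hx.trans_le hxy
  have hlog : 1 - x / y ≤ log (y / x) := by
    simpa [inv_div] using one_sub_inv_le_log_of_pos (div_pos hy hx)
  calc k * (y - x) = k * y * (1 - x / y) := by field_simp
    _ ≤ M * (1 - x / y) := by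
      gcongr
      rw [sub_nonneg, div_le_one hy]
      exact hxy
    _ ≤ M * log (y / x) := by
      gcongr
      exact (mul_nonneg hk hy.le).trans hM

variable {ι : Type*} [DecidableEq ι]

theorem sum_le_card_mul_add_mul_log {v : ι → ℝ} {M b : ℝ} (s : Finset ι)
    (hv : ∀ i ∈ s, 0 < v i) (hb : ∀ i ∈ s, v i ≤ b)
    (hM : ∀ i ∈ s, (#{i' ∈ s | v i ≤ v i'} : ℝ) * v i ≤ M)
    {i₀ : ι} (hi₀ : i₀ ∈ s) (hmin : ∀ i ∈ s, v i₀ ≤ v i) :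
    ∑ i ∈ s, v i ≤ #s * v i₀ + M * log (b / v i₀) := by
  induction s using Finset.strongInduction generalizing i₀ with
  | H s ih =>
  have hv₀ := hv i₀ hi₀
  have hM₀ : 0 ≤ M := (mul_nonneg (Nat.cast_nonneg _) hv₀.le).trans (hM i₀ hi₀)
  set t := s.erase i₀
  have hts : t ⊆ s := erase_subset i₀ s
  have hsplit : ∑ i ∈ s, v i = v i₀ + ∑ i ∈ t, v i := (add_sum_erase s v hi₀).symm
  have hcard : (#s : ℝ) = #t + 1 := by exact_mod_cast (card_erase_add_one hi₀).symm
  rcases t.eq_empty_or_nonempty with ht | ht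
  · have hlog : 0 ≤ log (b / v i₀) := log_nonneg ((one_le_div hv₀).mpr (hb i₀ hi₀))
    rw [hsplit, hcard, ht, sum_empty, card_empty, Nat.cast_zero, zero_add, one_mul]
    linarith [mul_nonneg hM₀ hlog]
  obtain ⟨i₁, hi₁, hmin₁⟩ := t.exists_min_image v ht
  have hv₁ := hv i₁ (hts hi₁)
  have hrest : ∑ i ∈ t, v i ≤ #t * v i₁ + M * log (b / v i₁) :=
    ih t (erase_ssubset hi₀) (fun i hi => hv i (hts hi)) (fun i hi => hb i (hts hi))
      (fun i hi => (mul_le_mul_of_nonneg_right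
        (Nat.cast_le.mpr (card_le_card (filter_subset_filter _ hts))) (hv i (hts hi)).le).trans
          (hM i (hts hi)))
      hi₁ hmin₁
  have hstep : (#t : ℝ) * (v i₁ - v i₀) ≤ M * log (v i₁ / v i₀) := by
    refine mul_sub_le_mul_log_div (Nat.cast_nonneg _) hv₀ (hmin i₁ (hts hi₁)) ?_
    have hle : #t ≤ #{i' ∈ s | v i₁ ≤ v i'} :=
      card_le_card fun i hi => mem_filter.mpr ⟨hts hi, hmin₁ i hi⟩
    exact (mul_le_mul_of_nonneg_right (Nat.cast_le.mpr hle) hv₁.le).trans (hM i₁ (hts hi₁))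
  have hlog : log (b / v i₀) = log (b / v i₁) + log (v i₁ / v i₀) := by
    rw [← log_mul (div_pos (hv₁.trans_le (hb i₁ (hts hi₁))) hv₁).ne' (div_pos hv₁ hv₀).ne',
      div_mul_div_cancel₀ hv₁.ne']
  rw [hsplit, hcard, hlog]
  linarith

theorem sum_le_mul_one_add_log_sup'_div_inf' {v : ι → ℝ} {M : ℝ} {s : Finset ι}
    (hs : s.Nonempty) (hv : ∀ i ∈ s, 0 < v i)
    (hM : ∀ i ∈ s, (#{i' ∈ s | v i ≤ v i'} : ℝ) * v i ≤ M) :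
    ∑ i ∈ s, v i ≤ M * (1 + log (s.sup' hs v / s.inf' hs v)) := by
  obtain ⟨i₀, hi₀, hinf⟩ := s.exists_mem_eq_inf' hs v
  have hmin : ∀ i ∈ s, v i₀ ≤ v i := fun i hi => hinf ▸ inf'_le v hi
  have hall : (#s : ℝ) * v i₀ ≤ M := by
    simpa [filter_true_of_mem hmin] using hM i₀ hi₀
  rw [hinf]
  calc ∑ i ∈ s, v i ≤ #s * v i₀ + M * log (s.sup' hs v / v i₀) :=
        sum_le_card_mul_add_mul_log s hv (fun i hi => le_sup' v hi) hM hi₀ hmin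
    _ ≤ M * (1 + log (s.sup' hs v / v i₀)) := by linarith

end

section

variable {n : ℕ} {P p : Fin n → ℝ} {c : Fin n}

lemma grev_le (hc : 0 ≤ P c) : grev P p c ≤ P c := by
  unfold grev
  split_ifs with h
  · exact (Finset.inf'_le p (by simp)).trans h
  · exact hc

lemma grev_nonneg (hp : ∀ j, 0 ≤ p j) : 0 ≤ grev P p c := by
  unfold grev
  split_ifs
  · exact Finset.le_inf' _ _ fun j _ => hp j
  · exact le_rfl

lemma le_grev {a : ℝ} (hc : p c ≤ P c) (hp : ∀ j, a ≤ p j) : a ≤ grev P p c := by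
  unfold grev
  rw [if_pos hc]
  exact Finset.le_inf' _ _ fun j _ => hp j

end

section

open Finset

variable {ι : Type*} [Fintype ι] {n : ℕ}

noncomputable def cutoffPrices (P : ι → Fin n → ℝ) (c : ι → Fin n) (p₀ pmax : ℝ)
    (j : Fin n) : ℝ :=
  if h : (univ.filter fun i => c i = j ∧ p₀ ≤ P i (c i)).Nonempty
  then (univ.filter fun i => c i = j ∧ p₀ ≤ P i (c i)).inf' h fun i => P i j
  else pmax

variable {P : ι → Fin n → ℝ} {c : ι → Fin n} {p₀ pmax : ℝ}

lemma le_cutoffPrices (hmax : p₀ ≤ pmax) (j : Fin n) : p₀ ≤ cutoffPrices P c p₀ pmax j := by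
  unfold cutoffPrices
  split_ifs
  · refine le_inf' _ _ fun i hi => ?_
    obtain ⟨rfl, hcut⟩ := (mem_filter.mp hi).2
    exact hcut
  · exact hmax

lemma cutoffPrices_le {i : ι} (hi : p₀ ≤ P i (c i)) :
    cutoffPrices P c p₀ pmax (c i) ≤ P i (c i) := by
  have hmem : i ∈ univ.filter fun i' => c i' = c i ∧ p₀ ≤ P i' (c i') := by simp [hi]
  unfold cutoffPrices
  rw [dif_pos ⟨i, hmem⟩]
  exact inf'_le _ hmem

theorem card_mul_le_sum_grev_cutoffPrices (h₀ : 0 ≤ p₀) (hmax : p₀ ≤ pmax) :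
    (#{i | p₀ ≤ P i (c i)} : ℝ) * p₀ ≤ ∑ i, grev (P i) (cutoffPrices P c p₀ pmax) (c i) := by
  rw [natCast_card_filter, sum_mul]
  refine sum_le_sum fun i _ => ?_
  split_ifs with hi
  · rw [one_mul]
    exact le_grev (cutoffPrices_le hi) (le_cutoffPrices hmax)
  · rw [zero_mul]
    exact grev_nonneg fun j => h₀.trans (le_cutoffPrices hmax j)

end

/-- Cut-off pricing generates total worst-case revenue at least the
fraction `1 / (1 + log (Pmax / Pmin))` of the optimal value, where `Pmin` and
`Pmax` are the minimum and maximum historical purchase prices. The cut-off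
price `pstar = P istar (c istar)` maximizes `#{i' : P_(i' c_i') ≥ P_(i c_i)} *
P_(i c_i)`, and each product is priced at its lowest historical purchase price
at least `pstar` (or `Pmax` if there is none). -/
theorem stmt_9 (m n : ℕ) [NeZero m]
    (P : Fin m → Fin n → ℝ) (c : Fin m → Fin n)
    (hP : ∀ i j, 0 < P i j)
    (istar : Fin m)
    (hstar : ∀ i : Fin m,
      ((Finset.univ.filter fun i' => P i (c i) ≤ P i' (c i')).card : ℝ)
          * P i (c i) ≤
        ((Finset.univ.filter fun i' => P istar (c istar) ≤ P i' (c i')).card : ℝ)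
          * P istar (c istar)) :
    let Pmin := Finset.univ.inf' Finset.univ_nonempty fun i => P i (c i)
    let Pmax := Finset.univ.sup' Finset.univ_nonempty fun i => P i (c i)
    let pstar := P istar (c istar)
    let pCP : Fin n → ℝ := fun j =>
      if h : (Finset.univ.filter fun i => c i = j ∧ pstar ≤ P i (c i)).Nonempty
      then (Finset.univ.filter fun i => c i = j ∧ pstar ≤ P i (c i)).inf' h
        fun i => P i j
      else Pmax
    ∀ p : Fin n → ℝ, (∀ j, 0 ≤ p j) →
      (1 / (1 + Real.log (Pmax / Pmin))) * ∑ i, grev (P i) p (c i) ≤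
        ∑ i, grev (P i) pCP (c i) := by
  intro Pmin Pmax pstar pCP p _
  set M := ((Finset.univ.filter fun i' => pstar ≤ P i' (c i')).card : ℝ) * pstar
  have hmin_le_max : Pmin ≤ Pmax := (Finset.inf'_le _ (Finset.mem_univ istar)).trans
    (Finset.le_sup' (fun i => P i (c i)) (Finset.mem_univ istar))
  have hpos : 0 < 1 + Real.log (Pmax / Pmin) := by
    have hPmin : 0 < Pmin := (Finset.lt_inf'_iff _).mpr fun i _ => hP i (c i)
    linarith [Real.log_nonneg ((one_le_div hPmin).mpr hmin_le_max)]
  have hopt : ∑ i, grev (P i) p (c i) ≤ M * (1 + Real.log (Pmax / Pmin)) :=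
    (Finset.sum_le_sum fun i _ => grev_le (hP i (c i)).le).trans
      (sum_le_mul_one_add_log_sup'_div_inf' _ (fun i _ => hP i (c i)) fun i _ => hstar i)
  have hcut : M ≤ ∑ i, grev (P i) pCP (c i) :=
    card_mul_le_sum_grev_cutoffPrices (hP istar (c istar)).le
      (Finset.le_sup' (fun i => P i (c i)) (Finset.mem_univ istar))
  rw [one_div, inv_mul_le_iff₀ hpos]
  calc ∑ i, grev (P i) p (c i) ≤ M * (1 + Real.log (Pmax / Pmin)) := hopt
    _ ≤ (1 + Real.log (Pmax / Pmin)) * ∑ i, grev (P i) pCP (c i) := by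
      rw [mul_comm]
      exact mul_le_mul_of_nonneg_left hcut hpos.le
end

section
/- For any nondecreasing sequence of positive reals 0 < q_1 ≤ q_2 ≤ ... ≤ q_m, it holds that max_{1 ≤ i ≤ m} (m - i + 1)·q_i ≥ (∑_{i=1}^m q_i) / (1 + log(q_m/q_1)). -/
/-!
Let `R` be the maximum of `(m - i) q_i` (indices from `0`). Abel summation gives
`∑ q = m q₀ + ∑_{j ≥ 1} (m - j) (q_j - q_{j-1})`, and since `log x ≥ 1 - 1/x` each increment satisfies
`(m - j) (q_j - q_{j-1}) ≤ (m - j) q_j log (q_j / q_{j-1}) ≤ R log (q_j / q_{j-1})`.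
The logarithms telescope, so `∑ q ≤ m q₀ + R log (q_{m-1} / q₀) ≤ R (1 + log (q_{m-1} / q₀))`.
-/

open Real

theorem sub_le_mul_log_div {a b : ℝ} (ha : 0 < a) (hb : 0 < b) : b - a ≤ b * log (b / a) := by
  have h := one_sub_inv_le_log_of_pos (div_pos hb ha)
  rw [inv_div] at h
  calc b - a = b * (1 - a / b) := by field_simp
    _ ≤ b * log (b / a) := mul_le_mul_of_nonneg_left h hb.le

theorem mul_sub_le_mul_log_div_s10 {a b c R : ℝ} (ha : 0 < a) (hab : a ≤ b) (hc : 0 ≤ c)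
    (hR : c * b ≤ R) : c * (b - a) ≤ R * log (b / a) := by
  have hb : 0 < b := ha.trans_le hab
  have hlog : 0 ≤ log (b / a) := log_nonneg ((one_le_div ha).mpr hab)
  calc c * (b - a) ≤ c * (b * log (b / a)) := mul_le_mul_of_nonneg_left (sub_le_mul_log_div ha hb) hc
    _ = c * b * log (b / a) := by ring
    _ ≤ R * log (b / a) := mul_le_mul_of_nonneg_right hR hlog

theorem sum_le_mul_head_add_mul_log_last_div_head {n : ℕ} (q : Fin (n + 1) → ℝ)
    (hq : ∀ i, 0 < q i) (hmono : Monotone q) {R : ℝ}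
    (hR : ∀ i : Fin (n + 1), ((n + 1 - i.1 : ℕ) : ℝ) * q i ≤ R) :
    ∑ i, q i ≤ (n + 1) * q 0 + R * log (q (Fin.last n) / q 0) := by
  induction n generalizing R with
  | zero => simp [div_self (hq 0).ne']
  | succ n ih =>
    have htail := ih (q ∘ Fin.succ) (fun i => hq i.succ) (hmono.comp Fin.strictMono_succ.monotone)
      fun i => by simpa using hR i.succ
    have hstep : ((n : ℝ) + 1) * (q 1 - q 0) ≤ R * log (q 1 / q 0) :=
      mul_sub_le_mul_log_div_s10 (hq 0) (hmono (Fin.zero_le 1)) (by positivity) (by simpa using hR 1)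
    have hlog : log (q (Fin.last (n + 1)) / q 0) =
        log (q (Fin.last (n + 1)) / q 1) + log (q 1 / q 0) := by
      rw [← log_mul (div_pos (hq _) (hq 1)).ne' (div_pos (hq 1) (hq 0)).ne',
        div_mul_div_cancel₀ (hq 1).ne']
    simp only [Function.comp_apply, Fin.succ_zero_eq_one, Fin.succ_last] at htail
    rw [Fin.sum_univ_succ, hlog]
    push_cast
    linarith

/-- For any nondecreasing sequence of positive reals
`0 < q 1 ≤ … ≤ q m`, `max_i (m - i + 1) * q i ≥ (∑ i, q i) / (1 + log (q m / q 1))`. -/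
theorem stmt_10 (m : ℕ) [NeZero m] (q : Fin m → ℝ)
    (hq : ∀ i, 0 < q i) (hmono : Monotone q) :
    (∑ i, q i) /
        (1 + Real.log
          (q ⟨m - 1, Nat.sub_lt (Nat.pos_of_ne_zero (NeZero.ne m)) Nat.one_pos⟩
            / q 0)) ≤
      Finset.univ.sup' Finset.univ_nonempty
        fun i => ((m - i.1 : ℕ) : ℝ) * q i := by
  obtain ⟨n, rfl⟩ : ∃ n, m = n + 1 := ⟨m - 1, (Nat.succ_pred_eq_of_ne_zero (NeZero.ne m)).symm⟩
  set R := Finset.univ.sup' Finset.univ_nonempty fun i : Fin (n + 1) => ((n + 1 - i.1 : ℕ) : ℝ) * q i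
  have hR (i : Fin (n + 1)) : ((n + 1 - i.1 : ℕ) : ℝ) * q i ≤ R :=
    Finset.le_sup' (fun i : Fin (n + 1) => ((n + 1 - i.1 : ℕ) : ℝ) * q i) (Finset.mem_univ i)
  have hlast : (⟨n + 1 - 1, Nat.sub_lt (Nat.pos_of_ne_zero (NeZero.ne (n + 1))) Nat.one_pos⟩ :
      Fin (n + 1)) = Fin.last n := Fin.ext (Nat.add_sub_cancel n 1)
  have hhead : ((n : ℝ) + 1) * q 0 ≤ R := by simpa using hR 0
  have hlog : 0 ≤ log (q (Fin.last n) / q 0) :=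
    log_nonneg ((one_le_div (hq 0)).mpr (hmono (Fin.zero_le _)))
  rw [hlast, div_le_iff₀ (by positivity)]
  calc ∑ i, q i ≤ (n + 1) * q 0 + R * log (q (Fin.last n) / q 0) :=
        sum_le_mul_head_add_mul_log_last_div_head q hq hmono hR
    _ ≤ R * (1 + log (q (Fin.last n) / q 0)) := by linarith
end
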